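/- arXiv:1810.05003 — 5 statements merged into one kernel-verified Lean document; each statement's English description precedes it below -/
import Mathlib

section
/- For the k-Fibonacci sequence, F_{k,n}·F_{k,m} + F_{k,n+1}·F_{k,m+1} = F_{k,n+m+1} for all n, m ≥ 0 (the Honsberger identity for k-Fibonacci numbers). -/
open TensorProduct

noncomputable def kFib (k : ℝ) : ℕ → ℝ
  | 0 => 0
  | 1 => 1
  | n + 2 => k * kFib k (n + 1) + kFib k n

abbrev Bicomplex : Type := ℂ ⊗[ℝ] ℂ

namespace kFib

variable (k : ℝ)

@[simp] lemma zero : kFib k 0 = 0 := rfl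

@[simp] lemma one : kFib k 1 = 1 := rfl

lemma add_two (n : ℕ) : kFib k (n + 2) = k * kFib k (n + 1) + kFib k n := rfl

end kFib

/- Induction on `n` for all `m` at once: the case `n + 1` at `m` is the case `n` at `m + 1`,
after expanding `F (m + 2)` and regrouping into `F (n + 2)`. -/
theorem stmt1_general (k : ℝ) (n m : ℕ) :
    kFib k n * kFib k m + kFib k (n + 1) * kFib k (m + 1) = kFib k (n + m + 1) := by
  induction n generalizing m with
  | zero => simp
  | succ n ih =>
    calc kFib k (n + 1) * kFib k m + kFib k (n + 2) * kFib k (m + 1)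
        = kFib k n * kFib k (m + 1) + kFib k (n + 1) * kFib k (m + 2) := by
          rw [kFib.add_two, kFib.add_two]; ring
      _ = kFib k (n + 1 + m + 1) := by rw [ih (m + 1)]; ring_nf

theorem stmt1 (k : ℝ) (hk : 0 < k) (n m : ℕ) :
    kFib k n * kFib k m + kFib k (n + 1) * kFib k (m + 1) = kFib k (n + m + 1) :=
  stmt1_general k n m
end

section
/- For the k-Fibonacci sequence, F_{k,n−1}·F_{k,n+3} − F_{k,n}·F_{k,n+2} = (−1)^n·(k²+1) for all n ≥ 1. -/
open TensorProduct

/-! The Casoratian `x m * y (m + 1) - x (m + 1) * y m` of two solutions of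
`u (n + 2) = k * u (n + 1) + u n` changes sign at every step. Applied to `F_{k,·}` and its shift
`F_{k,·+3}`, whose Casoratian at `0` is `-F_{k,3} = -(k² + 1)`, this is the identity. -/

section Casoratian

variable {R : Type*} [CommRing R] (k : R) {x y : ℕ → R}

theorem casoratian_succ (hx : ∀ n, x (n + 2) = k * x (n + 1) + x n)
    (hy : ∀ n, y (n + 2) = k * y (n + 1) + y n) (m : ℕ) :
    x (m + 1) * y (m + 2) - x (m + 2) * y (m + 1) = -(x m * y (m + 1) - x (m + 1) * y m) := by
  rw [hx, hy]
  ring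

theorem casoratian_eq_neg_one_pow_mul (hx : ∀ n, x (n + 2) = k * x (n + 1) + x n)
    (hy : ∀ n, y (n + 2) = k * y (n + 1) + y n) (m : ℕ) :
    x m * y (m + 1) - x (m + 1) * y m = (-1) ^ m * (x 0 * y 1 - x 1 * y 0) := by
  induction m with
  | zero => ring
  | succ m ih => rw [casoratian_succ k hx hy, ih, pow_succ]; ring

end Casoratian

theorem kFib_add_two (k : ℝ) (n : ℕ) : kFib k (n + 2) = k * kFib k (n + 1) + kFib k n := rfl

theorem stmt6_general (k : ℝ) (n : ℕ) (hn : 1 ≤ n) :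
    kFib k (n - 1) * kFib k (n + 3) - kFib k n * kFib k (n + 2) = (-1 : ℝ) ^ n * (k ^ 2 + 1) := by
  obtain ⟨m, rfl⟩ := Nat.exists_eq_add_of_le' hn
  have hcas := casoratian_eq_neg_one_pow_mul k (y := fun n ↦ kFib k (n + 3)) (kFib_add_two k)
    (fun n ↦ kFib_add_two k (n + 3)) m
  have hcas₀ : kFib k 0 * kFib k (1 + 3) - kFib k 1 * kFib k (0 + 3) = -(k ^ 2 + 1) := by
    simp only [kFib]
    ring
  rw [hcas₀] at hcas
  rw [Nat.add_sub_cancel, pow_succ]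
  linear_combination hcas

theorem stmt6 (k : ℝ) (hk : 0 < k) (n : ℕ) (hn : 1 ≤ n) :
    kFib k (n - 1) * kFib k (n + 3) - kFib k n * kFib k (n + 2) = (-1 : ℝ) ^ n * (k ^ 2 + 1) :=
  stmt6_general k n hn
end

section
/- For the bicomplex k-Fibonacci quaternion Q_{k,n} and its total conjugate Q_{k,n}^{*₃} = F_{k,n} − i·F_{k,n+1} − j·F_{k,n+2} + ij·F_{k,n+3}, one has Q_{k,n}·Q_{k,n}^{*₃} = F_{k,2n+1} + F_{k,2n+5} + 2·ij·(−1)^{n+1}·k. -/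
/-! Expanding with `i² = j² = -1` and `ij = ji`, the product `Q·Q^{*₃}` equals
`(F_n² + F_{n+1}² + F_{n+2}² + F_{n+3}²) + 2 (F_n F_{n+3} - F_{n+1} F_{n+2}) ij`.
The real part is `F_{2n+1} + F_{2n+5}` by the addition formula
`F_{m+n+1} = F_{m+1} F_{n+1} + F_m F_n`, and the `ij`-coefficient is `2 (-1)^{n+1} k`
by a Catalan-type identity. -/

open TensorProduct

noncomputable def bi : Bicomplex := (Complex.I : ℂ) ⊗ₜ[ℝ] (1 : ℂ)
noncomputable def bj : Bicomplex := (1 : ℂ) ⊗ₜ[ℝ] (Complex.I : ℂ)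

noncomputable def Q (k : ℝ) (n : ℕ) : Bicomplex :=
  algebraMap ℝ Bicomplex (kFib k n) + kFib k (n + 1) • bi
    + kFib k (n + 2) • bj + kFib k (n + 3) • (bi * bj)

theorem mul_totalConj_eq {R A : Type*} [CommRing R] [CommRing A] [Algebra R A] {i j : A}
    (hi : i * i = -1) (hj : j * j = -1) (a b c d : R) :
    (algebraMap R A a + b • i + c • j + d • (i * j)) *
        (algebraMap R A a - b • i - c • j + d • (i * j)) =
      algebraMap R A (a ^ 2 + b ^ 2 + c ^ 2 + d ^ 2) + (2 * (a * d - b * c)) • (i * j) := by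
  simp only [Algebra.smul_def, map_add, map_sub, map_mul, map_pow, map_ofNat]
  linear_combination (algebraMap R A d ^ 2 * (j * j) - algebraMap R A b ^ 2) * hi
    - (algebraMap R A c ^ 2 + algebraMap R A d ^ 2) * hj

theorem bi_mul_bi : bi * bi = -1 := by
  simp [bi, Algebra.TensorProduct.one_def, neg_tmul]

theorem bj_mul_bj : bj * bj = -1 := by
  simp [bj, Algebra.TensorProduct.one_def, tmul_neg]

theorem kFib_add_add_one (k : ℝ) (m n : ℕ) :
    kFib k (m + n + 1) = kFib k (m + 1) * kFib k (n + 1) + kFib k m * kFib k n := by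
  induction n generalizing m with
  | zero => simp [kFib]
  | succ n ih =>
    rw [show m + (n + 1) + 1 = (m + 1) + n + 1 by omega, ih, kFib_add_two, kFib_add_two]
    ring

theorem kFib_two_mul_add_one (k : ℝ) (n : ℕ) :
    kFib k (2 * n + 1) = kFib k (n + 1) ^ 2 + kFib k n ^ 2 := by
  rw [two_mul, kFib_add_add_one]
  ring

theorem kFib_mul_kFib_add_three_sub (k : ℝ) (n : ℕ) :
    kFib k n * kFib k (n + 3) - kFib k (n + 1) * kFib k (n + 2) = (-1) ^ (n + 1) * k := by
  induction n with
  | zero => simp [kFib]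
  | succ n ih =>
    rw [pow_succ, mul_right_comm, ← ih, kFib_add_two k (n + 2), kFib_add_two k n]
    ring

theorem stmt13_general (k : ℝ) (n : ℕ) :
    Q k n * (algebraMap ℝ Bicomplex (kFib k n) - kFib k (n + 1) • bi
        - kFib k (n + 2) • bj + kFib k (n + 3) • (bi * bj)) =
      algebraMap ℝ Bicomplex (kFib k (2 * n + 1) + kFib k (2 * n + 5))
        + (2 * (-1 : ℝ) ^ (n + 1) * k) • (bi * bj) := by
  have hsq : kFib k (2 * n + 1) + kFib k (2 * n + 5) =
      kFib k n ^ 2 + kFib k (n + 1) ^ 2 + kFib k (n + 2) ^ 2 + kFib k (n + 3) ^ 2 := by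
    rw [show 2 * n + 5 = 2 * (n + 2) + 1 by omega, kFib_two_mul_add_one, kFib_two_mul_add_one]
    ring
  rw [Q, mul_totalConj_eq bi_mul_bi bj_mul_bj, hsq, mul_assoc, kFib_mul_kFib_add_three_sub]

theorem stmt13 (k : ℝ) (hk : 0 < k) (n : ℕ) :
    Q k n * (algebraMap ℝ Bicomplex (kFib k n) - kFib k (n + 1) • bi
        - kFib k (n + 2) • bj + kFib k (n + 3) • (bi * bj)) =
      algebraMap ℝ Bicomplex (kFib k (2 * n + 1) + kFib k (2 * n + 5))
        + (2 * (-1 : ℝ) ^ (n + 1) * k) • (bi * bj) :=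
  stmt13_general k n
end

section
/- For the bicomplex k-Fibonacci and k-Lucas quaternions, Q_{k,n+2} − Q_{k,n−2} = k·Q^L_{k,n} for all n ≥ 2. -/
open TensorProduct

noncomputable def kLucas (k : ℝ) : ℕ → ℝ
  | 0 => 2
  | 1 => k
  | n + 2 => k * kLucas k (n + 1) + kLucas k n

noncomputable def QL (k : ℝ) (n : ℕ) : Bicomplex :=
  algebraMap ℝ Bicomplex (kLucas k n) + kLucas k (n + 1) • bi
    + kLucas k (n + 2) • bj + kLucas k (n + 3) • (bi * bj)

theorem kLucas_add_two (k : ℝ) (n : ℕ) :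
    kLucas k (n + 2) = k * kLucas k (n + 1) + kLucas k n := rfl

theorem kLucas_succ_eq_kFib_add (k : ℝ) (m : ℕ) :
    kLucas k (m + 1) = kFib k (m + 2) + kFib k m := by
  induction m using Nat.twoStepInduction with
  | zero => simp [kFib, kLucas]
  | one => simp [kFib, kLucas]; ring
  | more m ih₁ ih₂ =>
    rw [kLucas_add_two, ih₁, ih₂, kFib_add_two k (m + 2), kFib_add_two k m]
    ring

theorem kFib_add_four_sub (k : ℝ) (m : ℕ) :
    kFib k (m + 4) - kFib k m = k * kLucas k (m + 2) := by
  rw [kLucas_succ_eq_kFib_add, kFib_add_two k (m + 2), kFib_add_two k m]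
  ring

theorem Q_add_four_sub (k : ℝ) (m : ℕ) : Q k (m + 4) - Q k m = k • QL k (m + 2) := by
  have h₀ := kFib_add_four_sub k m
  have h₁ := kFib_add_four_sub k (m + 1)
  have h₂ := kFib_add_four_sub k (m + 2)
  have h₃ := kFib_add_four_sub k (m + 3)
  simp only [Q, QL, Algebra.algebraMap_eq_smul_one, smul_add, smul_smul,
    Nat.add_right_comm _ 4] at *
  rw [← h₀, ← h₁, ← h₂, ← h₃]
  module

theorem stmt15_general (k : ℝ) (n : ℕ) (hn : 2 ≤ n) :
    Q k (n + 2) - Q k (n - 2) = k • QL k n := by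
  obtain ⟨m, rfl⟩ : ∃ m, n = m + 2 := ⟨n - 2, by omega⟩
  simpa using Q_add_four_sub k m

theorem stmt15 (k : ℝ) (hk : 0 < k) (n : ℕ) (hn : 2 ≤ n) :
    Q k (n + 2) - Q k (n - 2) = k • QL k n :=
  stmt15_general k n hn
end

section
/- Binet's formula for bicomplex k-Fibonacci quaternions: Q_{k,n} = (α̂·αⁿ − β̂·βⁿ)/(α − β) for all n ≥ 0, where α̂ = 1 + iα + jα² + ijα³ and β̂ = 1 + iβ + jβ² + ijβ³. -/
open TensorProduct

/-! Since `Q k n` is `ℝ`-linear in `kFib k n, …, kFib k (n + 3)`, the bicomplex formula follows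
componentwise from the scalar Binet formula `(α - β) * kFib k n = α ^ n - β ^ n`, which holds for
any two roots of `x ^ 2 = k * x + 1`. -/

theorem sub_mul_kFib {k α β : ℝ} (hα : α ^ 2 = k * α + 1) (hβ : β ^ 2 = k * β + 1) (n : ℕ) :
    (α - β) * kFib k n = α ^ n - β ^ n := by
  induction n using Nat.twoStepInduction with
  | zero => simp [kFib]
  | one => simp [kFib]
  | more m ih ih' =>
    rw [kFib, pow_add α m 2, pow_add β m 2, hα, hβ]
    linear_combination k * ih' + ih

theorem half_add_sq_eq {k s : ℝ} (hs : s ^ 2 = k ^ 2 + 4) :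
    ((k + s) / 2) ^ 2 = k * ((k + s) / 2) + 1 := by
  linear_combination hs / 4

theorem stmt18_general (k : ℝ) (α β : ℝ)
    (hα : α = (k + Real.sqrt (k ^ 2 + 4)) / 2)
    (hβ : β = (k - Real.sqrt (k ^ 2 + 4)) / 2) (n : ℕ) :
    Q k n = (α - β)⁻¹ •
      (((1 : Bicomplex) + α • bi + (α ^ 2) • bj + (α ^ 3) • (bi * bj)) * algebraMap ℝ Bicomplex (α ^ n)
        - ((1 : Bicomplex) + β • bi + (β ^ 2) • bj + (β ^ 3) • (bi * bj)) * algebraMap ℝ Bicomplex (β ^ n)) := by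
  have hs : Real.sqrt (k ^ 2 + 4) ^ 2 = k ^ 2 + 4 := Real.sq_sqrt (by positivity)
  have hα_root : α ^ 2 = k * α + 1 := hα ▸ half_add_sq_eq hs
  have hβ_root : β ^ 2 = k * β + 1 := by
    rw [hβ, sub_eq_add_neg]
    exact half_add_sq_eq (by rwa [neg_sq])
  have hαβ : α - β = Real.sqrt (k ^ 2 + 4) := by rw [hα, hβ]; ring
  have hαβ_ne : α - β ≠ 0 := hαβ ▸ (Real.sqrt_pos.2 (by positivity)).ne'
  have hF (m : ℕ) : kFib k m = (α - β)⁻¹ * (α ^ m - β ^ m) := by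
    rw [← sub_mul_kFib hα_root hβ_root, inv_mul_cancel_left₀ hαβ_ne]
  simp only [Q, hF, Algebra.algebraMap_eq_smul_one, mul_smul_comm, mul_one]
  module

theorem stmt18 (k : ℝ) (hk : 0 < k) (α β : ℝ)
    (hα : α = (k + Real.sqrt (k ^ 2 + 4)) / 2)
    (hβ : β = (k - Real.sqrt (k ^ 2 + 4)) / 2) (n : ℕ) :
    Q k n = (α - β)⁻¹ •
      (((1 : Bicomplex) + α • bi + (α ^ 2) • bj + (α ^ 3) • (bi * bj)) * algebraMap ℝ Bicomplex (α ^ n)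
        - ((1 : Bicomplex) + β • bi + (β ^ 2) • bj + (β ^ 3) • (bi * bj)) * algebraMap ℝ Bicomplex (β ^ n)) :=
  stmt18_general k α β hα hβ n
end
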